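/- Let (g,B) be a non-Abelian solvable quadratic Lie algebra of dimension n (n ≥ 2). Then g is a one-dimensional double extension of a solvable quadratic Lie algebra of dimension n − 2: there exist a solvable quadratic Lie algebra (h, B_h) with dim(h) = n − 2 and a skew-symmetric derivation C of h such that g is i-isomorphic to the double extension of h by C, i.e. to the Lie algebra on h ⊕ ℂe ⊕ ℂf with bracket [X,Y] = [X,Y]_h + B_h(C(X),Y)·f, [e,X] = C(X), [f,·] = 0 for X,Y ∈ h, equipped with the form B̄ extending B_h by B̄(e,f)=1, B̄(e,e)=B̄(f,f)=B̄(e,h)=B̄(f,h)=0. -/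

import Mathlib

/-!
Let `D = [g, g]`. If `g = D + Z(g)` then `[D, D] = D`, which for solvable `g` forces `D = 0`.
Invariance and non-degeneracy of `B` give `Z(g) = Dᗮ`, and `D ∩ Dᗮ = 0` would force
`g = D ⊕ Dᗮ = D + Z(g)`; hence the non-Abelian `g` has a non-zero `f ∈ D ∩ Z(g)`, which is
isotropic.
Completing `f` to a hyperbolic pair `(e, f)`, the orthogonal `h = {e, f}ᗮ` with the bracket
`[x, y]_h = [x, y] - B(e, [x, y]) f` and the restricted form is a solvable quadratic Lie algebra,
and `x ↦ (x - B(f, x) e - B(e, x) f, B(f, x), B(e, x))` identifies `g` with the double extension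
of `h` by `ad e`.
-/

open Module

/-- A solvable quadratic Lie algebra: a finite-dimensional complex solvable Lie algebra
together with a symmetric, non-degenerate, invariant bilinear form. -/
structure SolvQuadLie where
  carrier : Type
  [lieRing : LieRing carrier]
  [lieAlgebra : LieAlgebra ℂ carrier]
  [finDim : FiniteDimensional ℂ carrier]
  form : LinearMap.BilinForm ℂ carrier
  symm : ∀ x y : carrier, form x y = form y x
  nondeg : form.Nondegenerate
  invariant : ∀ x y z : carrier, form ⁅x, y⁆ z = form x ⁅y, z⁆
  solvable : LieAlgebra.IsSolvable carrier

attribute [instance] SolvQuadLie.lieRing SolvQuadLie.lieAlgebra SolvQuadLie.finDim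

/-- The bracket of the double extension `h ⊕ ℂe ⊕ ℂf` of a quadratic Lie algebra
`(h, B)` by a skew-symmetric derivation `C`: an element `(x, a, c)` represents
`x + a·e + c·f`, and
`[x + a·e + c·f, y + a'·e + c'·f] = [x,y]_h + a·C(y) - a'·C(x) + B(C(x), y)·f`. -/
def deBracket (h : Type) [LieRing h] [LieAlgebra ℂ h]
    (B : LinearMap.BilinForm ℂ h) (C : h →ₗ[ℂ] h) :
    (h × ℂ × ℂ) → (h × ℂ × ℂ) → (h × ℂ × ℂ) :=
  fun u v => (⁅u.1, v.1⁆ + u.2.1 • C v.1 - v.2.1 • C u.1, 0, B (C u.1) v.1)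

/-- The bilinear form `B̄` of the double extension: it extends `B`, satisfies
`B̄(e, f) = 1` and vanishes on all other pairs involving `e` and `f`. -/
def deForm (h : Type) [AddCommGroup h] [Module ℂ h]
    (B : LinearMap.BilinForm ℂ h) : (h × ℂ × ℂ) → (h × ℂ × ℂ) → ℂ :=
  fun u v => B u.1 v.1 + u.2.1 * v.2.2 + u.2.2 * v.2.1

namespace LieAlgebra

variable {R L : Type*} [CommRing R] [LieRing L] [LieAlgebra R L]

theorem lie_mem_derivedSeries_one (x y : L) : ⁅x, y⁆ ∈ derivedSeries R L 1 :=
  LieSubmodule.lie_mem_lie (LieSubmodule.mem_top x) (LieSubmodule.mem_top y)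

theorem isLieAbelian_of_sup_center_eq_top [IsSolvable L]
    (h : derivedSeries R L 1 ⊔ center R L = ⊤) : IsLieAbelian L := by
  have perfect : ⁅derivedSeries R L 1, derivedSeries R L 1⁆ = derivedSeries R L 1 := by
    conv_rhs => rw [derivedSeries_def, derivedSeriesOfIdeal_succ, derivedSeriesOfIdeal_zero, ← h]
    rw [LieSubmodule.sup_lie, LieSubmodule.lie_sup, LieSubmodule.lie_sup,
      LieSubmodule.lie_comm (center R L)]
    simp
  have stable (k : ℕ) : derivedSeries R L (k + 1) = derivedSeries R L 1 := by
    induction k with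
    | zero => rfl
    | succ k ih =>
      rw [derivedSeries_def, derivedSeriesOfIdeal_succ, ← derivedSeries_def, ih, perfect]
  obtain ⟨k, hk⟩ := IsSolvable.solvable R L
  have derived_eq_bot : derivedSeries R L 1 = ⊥ := by
    rw [← stable k, eq_bot_iff, ← hk]
    exact derivedSeriesOfIdeal_succ_le ⊤ k
  refine ⟨fun x y => ?_⟩
  have hxy := lie_mem_derivedSeries_one (R := R) x y
  rwa [derived_eq_bot, LieSubmodule.mem_bot] at hxy

theorem mem_center_iff_mem_orthogonal_derivedSeries {B : LinearMap.BilinForm R L}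
    (hnd : B.Nondegenerate) (hinv : ∀ x y z : L, B ⁅x, y⁆ z = B x ⁅y, z⁆) (z : L) :
    z ∈ center R L ↔ z ∈ B.orthogonal (derivedSeries R L 1) := by
  rw [LieModule.mem_maxTrivSubmodule, LinearMap.BilinForm.mem_orthogonal_iff]
  constructor
  · intro hz n hn
    rw [coe_derivedSeries_one_eq] at hn
    induction hn using Submodule.span_induction with
    | mem _ h =>
      obtain ⟨x, y, rfl⟩ := h
      rw [hinv, hz, map_zero]
    | zero => simp
    | add _ _ _ _ h₁ h₂ => simp_all
    | smul _ _ _ h => simp_all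
  · intro hz x
    refine hnd.2 _ fun y => ?_
    rw [← hinv]
    exact hz _ (lie_mem_derivedSeries_one y x)

theorem exists_isotropic_ne_zero_mem_center {K : Type*} [Field K] [LieAlgebra K L]
    [FiniteDimensional K L] [IsSolvable L] {B : LinearMap.BilinForm K L}
    (hsymm : ∀ x y, B x y = B y x) (hnd : B.Nondegenerate)
    (hinv : ∀ x y z : L, B ⁅x, y⁆ z = B x ⁅y, z⁆) (hnonab : ¬ IsLieAbelian L) :
    ∃ f : L, f ≠ 0 ∧ f ∈ center K L ∧ B f f = 0 := by
  by_contra! hanisotropic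
  refine hnonab (isLieAbelian_of_sup_center_eq_top (R := K) ?_)
  have center_eq : (center K L : Submodule K L) = B.orthogonal (derivedSeries K L 1) :=
    Submodule.ext (mem_center_iff_mem_orthogonal_derivedSeries hnd hinv)
  have disjoint : Disjoint (derivedSeries K L 1 : Submodule K L)
      (B.orthogonal (derivedSeries K L 1)) := by
    refine Submodule.disjoint_def.mpr fun x hxD hxZ => ?_
    by_contra hx
    exact hanisotropic x hx ((mem_center_iff_mem_orthogonal_derivedSeries hnd hinv x).mpr hxZ)
      (hxZ x hxD)
  have sup_eq := ((LinearMap.BilinForm.isCompl_orthogonal_iff_disjoint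
    fun x y h => by rwa [hsymm]).mpr disjoint).sup_eq_top
  rw [← center_eq] at sup_eq
  rw [← LieSubmodule.toSubmodule_inj]
  simpa using sup_eq

end LieAlgebra

open LieAlgebra

theorem LinearMap.BilinForm.exists_hyperbolic_partner {K V : Type*} [Field K] [NeZero (2 : K)]
    [AddCommGroup V] [Module K V] {B : LinearMap.BilinForm K V} (hsymm : ∀ x y, B x y = B y x)
    (hnd : B.Nondegenerate) {f : V} (hf : f ≠ 0) (hff : B f f = 0) :
    ∃ e, B e e = 0 ∧ B e f = 1 := by
  obtain ⟨y, hy⟩ : ∃ y, B y f ≠ 0 := by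
    by_contra! h
    exact hf (hnd.2 f h)
  set e₁ := (B y f)⁻¹ • y
  have he₁f : B e₁ f = 1 := by simp [e₁, hy]
  have hfe₁ : B f e₁ = 1 := by rw [hsymm, he₁f]
  refine ⟨e₁ - (B e₁ e₁ / 2) • f, ?_, by simp [he₁f, hff]⟩
  simp only [map_sub, map_smul, LinearMap.sub_apply, LinearMap.smul_apply, smul_eq_mul,
    he₁f, hfe₁, hff]
  field_simp
  ring

structure CentralHyperbolicPair (R g : Type*) [CommRing R] [LieRing g] [LieAlgebra R g] where
  B : LinearMap.BilinForm R g
  e : g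
  f : g
  symm : ∀ x y : g, B x y = B y x
  nondeg : B.Nondegenerate
  invariant : ∀ x y z : g, B ⁅x, y⁆ z = B x ⁅y, z⁆
  e_isotropic : B e e = 0
  f_isotropic : B f f = 0
  pairing : B e f = 1
  lie_f : ∀ x : g, ⁅x, f⁆ = 0

namespace CentralHyperbolicPair

variable {R g : Type*} [CommRing R] [LieRing g] [LieAlgebra R g] (S : CentralHyperbolicPair R g)

lemma pairing_symm : S.B S.f S.e = 1 := by rw [S.symm, S.pairing]

lemma f_lie (x : g) : ⁅S.f, x⁆ = 0 := by rw [← lie_skew, S.lie_f, neg_zero]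

lemma B_f_lie (x y : g) : S.B S.f ⁅x, y⁆ = 0 := by
  rw [S.symm, S.invariant, S.lie_f, map_zero]

lemma B_e_lie_e (x : g) : S.B S.e ⁅S.e, x⁆ = 0 := by
  rw [← S.invariant, lie_self, map_zero, LinearMap.zero_apply]

def base : Submodule R g := LinearMap.ker (S.B S.e) ⊓ LinearMap.ker (S.B S.f)

lemma mem_base_iff {x : g} : x ∈ S.base ↔ S.B S.e x = 0 ∧ S.B S.f x = 0 := Iff.rfl

def proj : g →ₗ[R] g := LinearMap.id - (S.B S.f).smulRight S.e - (S.B S.e).smulRight S.f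

lemma proj_apply (x : g) : S.proj x = x - S.B S.f x • S.e - S.B S.e x • S.f := rfl

lemma proj_mem_base (x : g) : S.proj x ∈ S.base := by
  simp [mem_base_iff, proj_apply, S.e_isotropic, S.f_isotropic, S.pairing, S.pairing_symm,
    mul_comm]

lemma proj_eq_self {x : g} (hx : x ∈ S.base) : S.proj x = x := by
  obtain ⟨hex, hfx⟩ := S.mem_base_iff.mp hx
  rw [proj_apply, hex, hfx, zero_smul, zero_smul, sub_zero, sub_zero]

lemma proj_add_smul_add_smul (x : g) : S.proj x + S.B S.f x • S.e + S.B S.e x • S.f = x := by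
  rw [proj_apply]
  abel

lemma proj_of_B_f_eq_zero {u : g} (hu : S.B S.f u = 0) : S.proj u = u - S.B S.e u • S.f := by
  rw [proj_apply, hu, zero_smul, sub_zero]

lemma proj_lie_left {u : g} (hu : S.B S.f u = 0) (z : g) : ⁅S.proj u, z⁆ = ⁅u, z⁆ := by
  rw [S.proj_of_B_f_eq_zero hu, sub_lie, smul_lie, S.f_lie, smul_zero, sub_zero]

lemma proj_lie_right {u : g} (hu : S.B S.f u = 0) (z : g) : ⁅z, S.proj u⁆ = ⁅z, u⁆ := by
  rw [S.proj_of_B_f_eq_zero hu, lie_sub, lie_smul, S.lie_f, smul_zero, sub_zero]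

lemma lie_e_mem_base (x : g) : ⁅S.e, x⁆ ∈ S.base := ⟨S.B_e_lie_e x, S.B_f_lie _ _⟩

instance : LieRing S.base :=
  { (inferInstance : AddCommGroup S.base) with
    bracket x y := ⟨S.proj ⁅(x : g), y⁆, S.proj_mem_base _⟩
    add_lie x y z := Subtype.ext <| by simp only [Submodule.coe_add, add_lie, map_add]
    lie_add x y z := Subtype.ext <| by simp only [Submodule.coe_add, lie_add, map_add]
    lie_self x := Subtype.ext <| by simp only [lie_self, map_zero, Submodule.coe_zero]
    leibniz_lie x y z := Subtype.ext <| by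
      show S.proj ⁅(x : g), S.proj ⁅(y : g), z⁆⁆ =
        S.proj ⁅S.proj ⁅(x : g), y⁆, (z : g)⁆ + S.proj ⁅(y : g), S.proj ⁅(x : g), z⁆⁆
      rw [S.proj_lie_right (S.B_f_lie _ _), S.proj_lie_left (S.B_f_lie _ _),
        S.proj_lie_right (S.B_f_lie _ _), ← map_add, leibniz_lie] }

lemma coe_lie (x y : S.base) : ((⁅x, y⁆ : S.base) : g) = S.proj ⁅(x : g), y⁆ := rfl

instance : LieAlgebra R S.base where
  lie_smul t x y := Subtype.ext <| by simp only [coe_lie, Submodule.coe_smul, lie_smul, map_smul]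

lemma proj_e : S.proj S.e = 0 := by
  rw [proj_apply, S.pairing_symm, S.e_isotropic, one_smul, zero_smul, sub_self, sub_zero]

lemma proj_f : S.proj S.f = 0 := by
  rw [proj_apply, S.f_isotropic, S.pairing, one_smul, zero_smul, sub_zero, sub_self]

lemma B_proj_right {x : g} (hx : x ∈ S.base) (y : g) : S.B x (S.proj y) = S.B x y := by
  obtain ⟨hex, hfx⟩ := S.mem_base_iff.mp hx
  rw [proj_apply, map_sub, map_sub, map_smul, map_smul, S.symm x S.e, S.symm x S.f, hex, hfx,
    smul_zero, smul_zero, sub_zero, sub_zero]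

def baseForm : LinearMap.BilinForm R S.base := S.B.restrict S.base

lemma baseForm_apply (x y : S.base) : S.baseForm x y = S.B x y := rfl

lemma baseForm_nondegenerate : S.baseForm.Nondegenerate := by
  have separating : ∀ x : S.base, (∀ y, S.baseForm x y = 0) → x = 0 := fun x hx =>
    Subtype.ext <| S.nondeg.1 x fun y => by
      rw [← S.B_proj_right x.2]
      exact hx ⟨_, S.proj_mem_base y⟩
  exact ⟨separating, fun x hx => separating x fun y => by rw [baseForm_apply, S.symm]; exact hx y⟩

lemma baseForm_lie (x y z : S.base) : S.baseForm ⁅x, y⁆ z = S.baseForm x ⁅y, z⁆ := by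
  rw [baseForm_apply, baseForm_apply, coe_lie, coe_lie, S.symm, S.B_proj_right z.2, S.symm,
    S.B_proj_right x.2, S.invariant]

def adE : S.base →ₗ[R] S.base :=
  ((LieAlgebra.ad R g S.e).comp S.base.subtype).codRestrict S.base fun x => S.lie_e_mem_base x

lemma coe_adE (x : S.base) : (S.adE x : g) = ⁅S.e, (x : g)⁆ := rfl

lemma adE_lie (x y : S.base) : S.adE ⁅x, y⁆ = ⁅S.adE x, y⁆ + ⁅x, S.adE y⁆ := by
  refine Subtype.ext ?_
  rw [coe_adE, coe_lie, Submodule.coe_add, coe_lie, coe_lie, coe_adE, coe_adE,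
    S.proj_lie_right (S.B_f_lie _ _), ← map_add, ← leibniz_lie, S.proj_eq_self (S.lie_e_mem_base _)]

lemma baseForm_adE (x y : S.base) : S.baseForm (S.adE x) y = -S.baseForm x (S.adE y) := by
  rw [baseForm_apply, baseForm_apply, coe_adE, coe_adE, ← S.invariant, ← lie_skew, map_neg,
    LinearMap.neg_apply]

def equivProd : g ≃ₗ[R] S.base × R × R :=
  { (S.proj.codRestrict S.base S.proj_mem_base).prod ((S.B S.f).prod (S.B S.e)) with
    invFun := fun p => p.1 + p.2.1 • S.e + p.2.2 • S.f
    left_inv := S.proj_add_smul_add_smul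
    right_inv := fun ⟨w, a, c⟩ => by
      obtain ⟨hew, hfw⟩ := S.mem_base_iff.mp w.2
      refine Prod.ext (Subtype.ext ?_) (Prod.ext ?_ ?_)
      · simp [S.proj_eq_self w.2, S.proj_e, S.proj_f]
      · simp [hfw, S.pairing_symm, S.f_isotropic]
      · simp [hew, S.pairing, S.e_isotropic] }

def fOrthogonal : LieIdeal R g where
  toSubmodule := LinearMap.ker (S.B S.f)
  lie_mem {x y} _ := S.B_f_lie x y

def projHom : S.fOrthogonal →ₗ⁅R⁆ S.base where
  toLinearMap := (S.proj.comp S.fOrthogonal.toSubmodule.subtype).codRestrict S.base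
    fun x => S.proj_mem_base x
  map_lie' {x y} := Subtype.ext <| by
    show S.proj ⁅(x : g), (y : g)⁆ = S.proj ⁅S.proj x, S.proj y⁆
    rw [S.proj_lie_left x.2, S.proj_lie_right y.2]

lemma projHom_surjective : Function.Surjective S.projHom := fun w =>
  ⟨⟨w, (S.mem_base_iff.mp w.2).2⟩, Subtype.ext (S.proj_eq_self w.2)⟩

instance [IsSolvable g] : IsSolvable S.base :=
  have := (LieIdeal.incl_injective S.fOrthogonal).lieAlgebra_isSolvable
  S.projHom_surjective.lieAlgebra_isSolvable

lemma lie_eq (x y : g) :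
    ⁅x, y⁆ = ⁅S.proj x, S.proj y⁆ + S.B S.f x • ⁅S.e, S.proj y⁆ - S.B S.f y • ⁅S.e, S.proj x⁆ := by
  conv_lhs => rw [← S.proj_add_smul_add_smul x, ← S.proj_add_smul_add_smul y]
  simp only [add_lie, lie_add, smul_lie, lie_smul, lie_self, S.lie_f, S.f_lie, smul_zero,
    add_zero, ← lie_skew (S.proj x) S.e]
  module

end CentralHyperbolicPair

lemma CentralHyperbolicPair.finrank_eq {K g : Type*} [Field K] [LieRing g] [LieAlgebra K g]
    [FiniteDimensional K g] (S : CentralHyperbolicPair K g) :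
    finrank K g = finrank K S.base + 2 := by
  rw [S.equivProd.finrank_eq, finrank_prod, finrank_prod, finrank_self]

namespace CentralHyperbolicPair

variable {g : Type} [LieRing g] [LieAlgebra ℂ g] (S : CentralHyperbolicPair ℂ g)

lemma equivProd_lie (x y : g) :
    S.equivProd ⁅x, y⁆ = deBracket S.base S.baseForm S.adE (S.equivProd x) (S.equivProd y) := by
  have proj_e_lie (z : g) : S.proj ⁅S.e, z⁆ = ⁅S.e, z⁆ := S.proj_eq_self (S.lie_e_mem_base z)
  refine Prod.ext (Subtype.ext ?_) (Prod.ext (S.B_f_lie x y) ?_)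
  · show S.proj ⁅x, y⁆ =
      S.proj ⁅S.proj x, S.proj y⁆ + S.B S.f x • ⁅S.e, S.proj y⁆ - S.B S.f y • ⁅S.e, S.proj x⁆
    conv_lhs => rw [S.lie_eq x y]
    rw [map_sub, map_add, map_smul, map_smul, proj_e_lie, proj_e_lie]
  · show S.B S.e ⁅x, y⁆ = S.B ⁅S.e, S.proj x⁆ (S.proj y)
    conv_lhs => rw [S.lie_eq x y]
    rw [map_sub, map_add, map_smul, map_smul, S.B_e_lie_e, S.B_e_lie_e, smul_zero, smul_zero,
      add_zero, sub_zero, S.invariant]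

lemma deForm_equivProd (x y : g) :
    deForm S.base S.baseForm (S.equivProd x) (S.equivProd y) = S.B x y := by
  show S.B (S.proj x) (S.proj y) + S.B S.f x * S.B S.e y + S.B S.e x * S.B S.f y = S.B x y
  rw [S.B_proj_right (S.proj_mem_base x), S.symm, proj_apply]
  simp only [map_sub, map_smul, LinearMap.sub_apply, LinearMap.smul_apply, smul_eq_mul, S.symm y]
  ring

def toSolvQuadLie [FiniteDimensional ℂ g] [IsSolvable g] : SolvQuadLie where
  carrier := S.base
  form := S.baseForm
  symm x y := S.symm x y
  nondeg := S.baseForm_nondegenerate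
  invariant := S.baseForm_lie
  solvable := inferInstance

end CentralHyperbolicPair

theorem solvable_quadratic_is_double_extension_general (n : ℕ)
    (g : Type) [LieRing g] [LieAlgebra ℂ g] [FiniteDimensional ℂ g]
    (B : LinearMap.BilinForm ℂ g)
    (hsymm : ∀ x y : g, B x y = B y x)
    (hnd : B.Nondegenerate)
    (hinv : ∀ x y z : g, B ⁅x, y⁆ z = B x ⁅y, z⁆)
    (hsolv : LieAlgebra.IsSolvable g)
    (hnonab : ¬ IsLieAbelian g)
    (hdim : finrank ℂ g = n) :
    ∃ (H : SolvQuadLie) (C : H.carrier →ₗ[ℂ] H.carrier),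
      finrank ℂ H.carrier = n - 2 ∧
      (∀ x y : H.carrier, C ⁅x, y⁆ = ⁅C x, y⁆ + ⁅x, C y⁆) ∧
      (∀ x y : H.carrier, H.form (C x) y = -(H.form x (C y))) ∧
      ∃ A : g ≃ₗ[ℂ] H.carrier × ℂ × ℂ,
        (∀ x y : g, A ⁅x, y⁆ = deBracket H.carrier H.form C (A x) (A y)) ∧
        (∀ x y : g, deForm H.carrier H.form (A x) (A y) = B x y) := by
  obtain ⟨f, hf, hf_center, hff⟩ := exists_isotropic_ne_zero_mem_center hsymm hnd hinv hnonab
  obtain ⟨e, hee, hef⟩ := LinearMap.BilinForm.exists_hyperbolic_partner hsymm hnd hf hff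
  let S : CentralHyperbolicPair ℂ g := ⟨B, e, f, hsymm, hnd, hinv, hee, hff, hef,
    (LieModule.mem_maxTrivSubmodule ℂ g g f).mp hf_center⟩
  refine ⟨S.toSolvQuadLie, S.adE, ?_, S.adE_lie, S.baseForm_adE, S.equivProd, S.equivProd_lie,
    S.deForm_equivProd⟩
  show finrank ℂ S.base = n - 2
  have := S.finrank_eq
  omega

/-- Let `(g, B)` be a non-Abelian solvable quadratic Lie algebra of dimension `n ≥ 2`.
Then `g` is a one-dimensional double extension of a solvable quadratic Lie algebra of
dimension `n - 2`: there exist a solvable quadratic Lie algebra `(h, B_h)` of dimension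
`n - 2` and a skew-symmetric derivation `C` of `h` such that `g` is i-isomorphic to the
double extension of `h` by `C`. -/
theorem solvable_quadratic_is_double_extension (n : ℕ) (hn : 2 ≤ n)
    (g : Type) [LieRing g] [LieAlgebra ℂ g] [FiniteDimensional ℂ g]
    (B : LinearMap.BilinForm ℂ g)
    (hsymm : ∀ x y : g, B x y = B y x)
    (hnd : B.Nondegenerate)
    (hinv : ∀ x y z : g, B ⁅x, y⁆ z = B x ⁅y, z⁆)
    (hsolv : LieAlgebra.IsSolvable g)
    (hnonab : ¬ IsLieAbelian g)
    (hdim : finrank ℂ g = n) :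
    ∃ (H : SolvQuadLie) (C : H.carrier →ₗ[ℂ] H.carrier),
      finrank ℂ H.carrier = n - 2 ∧
      (∀ x y : H.carrier, C ⁅x, y⁆ = ⁅C x, y⁆ + ⁅x, C y⁆) ∧
      (∀ x y : H.carrier, H.form (C x) y = -(H.form x (C y))) ∧
      ∃ A : g ≃ₗ[ℂ] H.carrier × ℂ × ℂ,
        (∀ x y : g, A ⁅x, y⁆ = deBracket H.carrier H.form C (A x) (A y)) ∧
        (∀ x y : g, deForm H.carrier H.form (A x) (A y) = B x y) :=
  solvable_quadratic_is_double_extension_general n g B hsymm hnd hinv hsolv hnonab hdim
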